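/- arXiv:1706.02272 — 4 statements merged into one kernel-verified Lean document; each statement's English description precedes it below -/
import Mathlib

section
/- Let 0 < ρ < 1, κ > 0 and c > 0. Then there exists T₀ > 0 such that for all sampling times T with 0 < T ≤ T₀ and all s, a ∈ ℝ with |a| ≤ c·|s|, the Lyapunov difference V(s′, a′) − V(s, a) ≤ 0, where s′ = ρ·s + T·a, a′ = a − (T/κ)·s and V(s, a) = (1/2)s² + (1/2)κa². That is, in a conic region around (s, α̃) = (0, 0) the Lyapunov difference function is negative semi-definite for sufficiently small sampling periods. -/
set_option maxHeartbeats 1000000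


/-- For sufficiently small sampling periods, the Lyapunov difference of the
adaptive DSMC is negative semi-definite in the conic region `|a| ≤ c |s|`
around the origin. -/
theorem lyapunov_difference_nonpos_small_sampling (ρ κ c : ℝ) (hρ0 : 0 < ρ)
    (hρ1 : ρ < 1) (hκ : 0 < κ) (hc : 0 < c) :
    ∃ T₀ > 0, ∀ T : ℝ, 0 < T → T ≤ T₀ → ∀ s a : ℝ, |a| ≤ c * |s| →
      ((1 / 2) * (ρ * s + T * a) ^ 2 +
          (1 / 2) * κ * (a - (T / κ) * s) ^ 2) -
        ((1 / 2) * s ^ 2 + (1 / 2) * κ * a ^ 2) ≤ 0 := by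
  have hρ' : (0:ℝ) < 1 - ρ := by linarith
  have hεpos : 0 < (1 - ρ ^ 2) / 2 := by nlinarith
  have hKpos : 0 < c ^ 2 + 1 / κ := by positivity
  refine ⟨min ((1 - ρ ^ 2) / 2 / (2 * c * (1 - ρ)))
      (Real.sqrt ((1 - ρ ^ 2) / 2 / (c ^ 2 + 1 / κ))), ?_, ?_⟩
  · exact lt_min (by positivity) (Real.sqrt_pos.mpr (by positivity))
  intro T hT hTle s a ha
  have hT1 : (1 - ρ) * T * c ≤ (1 - ρ ^ 2) / 2 / 2 := by
    have h := le_trans hTle (min_le_left _ _)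
    have h2 : 0 < 2 * c * (1 - ρ) := by positivity
    rw [le_div_iff₀ h2] at h
    nlinarith
  have hT2 : T ^ 2 * (c ^ 2 + 1 / κ) ≤ (1 - ρ ^ 2) / 2 := by
    have h := le_trans hTle (min_le_right _ _)
    have hq : T ^ 2 ≤ (1 - ρ ^ 2) / 2 / (c ^ 2 + 1 / κ) := by
      have hs := Real.sq_sqrt (le_of_lt (show (0:ℝ) < (1 - ρ ^ 2) / 2 / (c ^ 2 + 1 / κ) by positivity))
      nlinarith [Real.sqrt_nonneg ((1 - ρ ^ 2) / 2 / (c ^ 2 + 1 / κ))]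
    rw [le_div_iff₀ hKpos] at hq
    linarith
  have hkey : ((1 / 2) * (ρ * s + T * a) ^ 2 +
          (1 / 2) * κ * (a - (T / κ) * s) ^ 2) -
        ((1 / 2) * s ^ 2 + (1 / 2) * κ * a ^ 2)
      = (1/2) * (ρ^2 - 1) * s^2 + (ρ - 1) * T * (s * a)
        + T^2 / 2 * a^2 + T^2 * (1 / κ) / 2 * s^2 := by
    field_simp
    ring
  rw [hkey]
  have hs2 : (0:ℝ) ≤ s ^ 2 := sq_nonneg s
  have hsa : -(s * a) ≤ c * s ^ 2 := by
    calc -(s * a) ≤ |s * a| := neg_le_abs _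
    _ = |s| * |a| := abs_mul s a
    _ ≤ |s| * (c * |s|) := mul_le_mul_of_nonneg_left ha (abs_nonneg s)
    _ = c * s ^ 2 := by rw [← sq_abs]; ring
  have ha2 : a ^ 2 ≤ c ^ 2 * s ^ 2 := by
    nlinarith [sq_abs a, sq_abs s, abs_nonneg a, abs_nonneg s,
      mul_le_mul ha ha (abs_nonneg a) (by positivity : (0:ℝ) ≤ c * |s|)]
  have h1 : (ρ - 1) * T * (s * a) ≤ (1 - ρ) * T * (c * s ^ 2) := by
    have h0 : 0 ≤ (1 - ρ) * T := by positivity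
    calc (ρ - 1) * T * (s * a) = (1 - ρ) * T * (-(s * a)) := by ring
    _ ≤ (1 - ρ) * T * (c * s ^ 2) := mul_le_mul_of_nonneg_left hsa h0
  have h2 : T ^ 2 / 2 * a ^ 2 ≤ T ^ 2 / 2 * (c ^ 2 * s ^ 2) :=
    mul_le_mul_of_nonneg_left ha2 (by positivity)
  have heq : (1/2) * (ρ^2 - 1) * s^2 = -(((1 - ρ ^ 2) / 2) * s^2) := by ring
  have p1 := mul_le_mul_of_nonneg_right hT1 hs2
  have p2 := mul_le_mul_of_nonneg_right hT2 hs2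
  have p1' : (1 - ρ) * T * (c * s ^ 2) ≤ (1 - ρ ^ 2) / 2 / 2 * s ^ 2 := by
    linarith [p1]
  nlinarith [p1', p2, h1, h2]
end

section
/- Let 0 < ρ < 1, κ > 0 and T > 0 satisfy T² < (1 − ρ)·κ. Let (s(i)), (α̃(i)) be real sequences satisfying the coupled closed-loop recursions s(i+1) = ρ·s(i) + T·α̃(i) and α̃(i+1) = α̃(i) − (T/κ)·s(i) for all i. Then s(i) → 0 and α̃(i) → 0 as i → ∞; in particular, the parameter estimate α̂(i) = α − α̃(i) converges to the true additive uncertainty α. -/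
open Filter

lemma iss_lemma (l : ℂ) (hl : ‖l‖ < 1) (x y : ℕ → ℂ)
    (hy : Tendsto y atTop (nhds 0))
    (hx : ∀ i, x (i + 1) = l * x i + y i) :
    Tendsto x atTop (nhds 0) := by
  have hr0 : (0:ℝ) ≤ ‖l‖ := norm_nonneg _
  rw [tendsto_zero_iff_norm_tendsto_zero] at hy
  rw [tendsto_zero_iff_norm_tendsto_zero]
  rw [Metric.tendsto_atTop] at hy ⊢
  intro ε hε
  have h1r : 0 < 1 - ‖l‖ := by linarith
  have hδ : 0 < ε * (1 - ‖l‖) / 2 := by positivity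
  obtain ⟨N, hN⟩ := hy _ hδ
  have hNb : ∀ i, N ≤ i → ‖y i‖ ≤ ε * (1 - ‖l‖) / 2 := by
    intro i hi
    have := hN i hi
    rw [Real.dist_eq] at this
    have h2 : |‖y i‖ - 0| = ‖y i‖ := by
      rw [sub_zero, abs_of_nonneg (norm_nonneg _)]
    linarith [abs_lt.1 this |>.2, h2 ▸ this]
  have key : ∀ k, ‖x (N + k)‖ ≤ ‖l‖ ^ k * ‖x N‖ + ε / 2 := by
    intro k
    induction k with
    | zero => simp; linarith
    | succ k ih =>
      have h1 : x (N + (k+1)) = l * x (N + k) + y (N + k) := by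
        rw [← hx (N + k)]; ring_nf
      calc ‖x (N + (k+1))‖ ≤ ‖l * x (N + k)‖ + ‖y (N + k)‖ := by
            rw [h1]; exact norm_add_le _ _
        _ = ‖l‖ * ‖x (N + k)‖ + ‖y (N + k)‖ := by rw [norm_mul]
        _ ≤ ‖l‖ * (‖l‖ ^ k * ‖x N‖ + ε / 2) + ε * (1 - ‖l‖) / 2 := by
            have := hNb (N + k) (Nat.le_add_right _ _)
            have := mul_le_mul_of_nonneg_left ih hr0
            linarith
        _ ≤ ‖l‖ ^ (k+1) * ‖x N‖ + ε / 2 := by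
            rw [pow_succ]
            nlinarith [norm_nonneg (x N), pow_nonneg hr0 k]
  obtain ⟨K, hK⟩ := (Metric.tendsto_atTop.1
    (tendsto_pow_atTop_nhds_zero_of_lt_one hr0 hl)) (ε / (2 * (‖x N‖ + 1)))
    (by positivity)
  refine ⟨N + K, fun i hi => ?_⟩
  have hiN : N ≤ i := le_trans (Nat.le_add_right _ _) hi
  obtain ⟨k, rfl⟩ := Nat.exists_eq_add_of_le hiN
  have hkK : K ≤ k := by omega
  have h2 : ‖l‖ ^ k ≤ ‖l‖ ^ K := pow_le_pow_of_le_one hr0 hl.le hkK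
  have h3 : ‖l‖ ^ K < ε / (2 * (‖x N‖ + 1)) := by
    have := hK K le_rfl
    rw [Real.dist_eq, sub_zero, abs_of_nonneg (pow_nonneg hr0 _)] at this
    exact this
  have h4 : ‖l‖ ^ k * ‖x N‖ < ε / 2 := by
    have hxN : (0:ℝ) < ‖x N‖ + 1 := by positivity
    have : ‖l‖ ^ k * (‖x N‖ + 1) < ε / (2 * (‖x N‖ + 1)) * (‖x N‖ + 1) := by
      apply mul_lt_mul_of_pos_right _ hxN
      exact lt_of_le_of_lt h2 h3
    rw [div_mul_eq_mul_div, mul_comm (2:ℝ), ← div_div, mul_div_assoc,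
      div_self (ne_of_gt hxN), mul_one] at this
    nlinarith [pow_nonneg hr0 k, norm_nonneg (x N)]
  rw [Real.dist_eq, sub_zero, abs_of_nonneg (norm_nonneg _)]
  calc ‖x (N + k)‖ ≤ ‖l‖ ^ k * ‖x N‖ + ε / 2 := key k
    _ < ε := by linarith


lemma eig_exists (ρ κ T : ℝ) (hρ0 : 0 < ρ) (hρ1 : ρ < 1) (hκ : 0 < κ) (hT : 0 < T)
    (hTκ : T ^ 2 < (1 - ρ) * κ) :
    ∃ l m : ℂ, ‖l‖ < 1 ∧ ‖m‖ < 1 ∧ l + m = ((1 + ρ : ℝ) : ℂ) ∧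
      l * m = ((ρ + T ^ 2 / κ : ℝ) : ℂ) := by
  set b : ℝ := 1 + ρ with hb
  set c : ℝ := ρ + T ^ 2 / κ with hc
  have hc0 : 0 < c := by
    have : 0 < T ^ 2 / κ := by positivity
    simp only [hc]; linarith
  have hc1 : c < 1 := by
    have h1 : T ^ 2 / κ < 1 - ρ := (div_lt_iff₀ hκ).2 (by linarith [hTκ])
    simp only [hc]; linarith
  set d : ℝ := b ^ 2 - 4 * c with hd
  rcases le_or_gt 0 d with hd0 | hd0
  · -- real roots
    have hsd : Real.sqrt d < 1 - ρ := by
      have hdlt : d < (1 - ρ) ^ 2 := by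
        have h1 : 0 < T ^ 2 / κ := by positivity
        have h2 : b ^ 2 - 4 * c = (1 - ρ) ^ 2 - 4 * (T ^ 2 / κ) := by
          simp only [hb, hc]; ring
        rw [hd, h2]; linarith
      calc Real.sqrt d < Real.sqrt ((1 - ρ) ^ 2) := Real.sqrt_lt_sqrt hd0 hdlt
        _ = 1 - ρ := Real.sqrt_sq (by linarith)
    have hsd0 : 0 ≤ Real.sqrt d := Real.sqrt_nonneg _
    have hsdb : Real.sqrt d < b := by simp only [hb]; linarith
    refine ⟨(((b + Real.sqrt d) / 2 : ℝ) : ℂ), (((b - Real.sqrt d) / 2 : ℝ) : ℂ),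
      ?_, ?_, ?_, ?_⟩
    · rw [Complex.norm_real, Real.norm_eq_abs,
        abs_of_nonneg (by simp only [hb]; linarith)]
      simp only [hb]; linarith
    · rw [Complex.norm_real, Real.norm_eq_abs,
        abs_of_nonneg (by linarith)]
      simp only [hb]; linarith
    · push_cast; ring
    · have hsq : Real.sqrt d ^ 2 = d := Real.sq_sqrt hd0
      have key : ((b + Real.sqrt d) / 2) * ((b - Real.sqrt d) / 2) = c := by
        have h3 : ((b + Real.sqrt d) / 2) * ((b - Real.sqrt d) / 2)
            = (b ^ 2 - Real.sqrt d ^ 2) / 4 := by ring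
        rw [h3, hsq, hd]; ring
      push_cast [← key]
      ring
  · -- complex roots
    have hnd0 : 0 ≤ -d := by linarith
    set w : ℝ := Real.sqrt (-d) with hw
    have hw2 : w ^ 2 = -d := Real.sq_sqrt hnd0
    have hceq : (b/2)^2 + (w/2)^2 = c := by
      have h4 : (b/2)^2 + (w/2)^2 = (b^2 + w^2)/4 := by ring
      rw [h4, hw2, hd]; ring
    have hprod : (((b / 2 : ℝ) : ℂ) + ((w / 2 : ℝ) : ℂ) * Complex.I) *
        (((b / 2 : ℝ) : ℂ) - ((w / 2 : ℝ) : ℂ) * Complex.I) = ((c : ℝ) : ℂ) := by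
      calc (((b / 2 : ℝ) : ℂ) + ((w / 2 : ℝ) : ℂ) * Complex.I) *
          (((b / 2 : ℝ) : ℂ) - ((w / 2 : ℝ) : ℂ) * Complex.I)
          = ((b / 2 : ℝ) : ℂ) ^ 2 - ((w / 2 : ℝ) : ℂ) ^ 2 * Complex.I ^ 2 := by
            ring
        _ = ((b / 2 : ℝ) : ℂ) ^ 2 + ((w / 2 : ℝ) : ℂ) ^ 2 := by
            rw [Complex.I_sq]; ring
        _ = (((b/2)^2 + (w/2)^2 : ℝ) : ℂ) := by push_cast; ring
        _ = ((c : ℝ) : ℂ) := by rw [hceq]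
    have hn1 : ‖((b / 2 : ℝ) : ℂ) + ((w / 2 : ℝ) : ℂ) * Complex.I‖ ^ 2 = c := by
      rw [← Complex.normSq_eq_norm_sq]
      simp [Complex.normSq_apply]
      rw [← hceq]; ring
    have hn2 : ‖((b / 2 : ℝ) : ℂ) - ((w / 2 : ℝ) : ℂ) * Complex.I‖ ^ 2 = c := by
      rw [← Complex.normSq_eq_norm_sq]
      simp [Complex.normSq_apply]
      rw [← hceq]; ring
    refine ⟨((b / 2 : ℝ) : ℂ) + ((w / 2 : ℝ) : ℂ) * Complex.I,
      ((b / 2 : ℝ) : ℂ) - ((w / 2 : ℝ) : ℂ) * Complex.I, ?_, ?_, ?_, hprod⟩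
    · nlinarith [norm_nonneg (((b / 2 : ℝ) : ℂ) + ((w / 2 : ℝ) : ℂ) * Complex.I), hn1]
    · nlinarith [norm_nonneg (((b / 2 : ℝ) : ℂ) - ((w / 2 : ℝ) : ℂ) * Complex.I), hn2]
    · push_cast; ring


/-- If `T² < (1 - ρ) κ`, the coupled closed-loop recursions
`s (i+1) = ρ s i + T α̃ i` and `α̃ (i+1) = α̃ i - (T/κ) s i` drive both the
sliding variable and the estimation error to zero; in particular the estimate
`α̂ i = α - α̃ i` converges to the true additive uncertainty `α`. -/
theorem adaptive_dsmc_additive_convergence (ρ κ T α : ℝ) (hρ0 : 0 < ρ)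
    (hρ1 : ρ < 1) (hκ : 0 < κ) (hT : 0 < T) (hTκ : T ^ 2 < (1 - ρ) * κ)
    (s αtil : ℕ → ℝ)
    (hs : ∀ i, s (i + 1) = ρ * s i + T * αtil i)
    (ha : ∀ i, αtil (i + 1) = αtil i - (T / κ) * s i) :
    Filter.Tendsto s Filter.atTop (nhds 0) ∧
      Filter.Tendsto αtil Filter.atTop (nhds 0) ∧
      Filter.Tendsto (fun i => α - αtil i) Filter.atTop (nhds α) := by
  obtain ⟨l, m, hl, hm, hsum, hprodc⟩ := eig_exists ρ κ T hρ0 hρ1 hκ hT hTκ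
  -- second-order recurrence for s
  have hrecR : ∀ i, s (i + 2) = (1 + ρ) * s (i + 1) - (ρ + T ^ 2 / κ) * s i := by
    intro i
    have h1 := hs (i + 1)
    have h2 := ha i
    have h3 := hs i
    rw [h1, h2]
    field_simp
    nlinarith [h3]
  -- complex version
  have hrecC : ∀ i, ((s (i + 2) : ℝ) : ℂ)
      = ((1 + ρ : ℝ) : ℂ) * s (i + 1) - ((ρ + T ^ 2 / κ : ℝ) : ℂ) * s i := by
    intro i
    rw [hrecR i]
    push_cast
    ring
  set z : ℕ → ℂ := fun i => ((s (i + 1) : ℝ) : ℂ) - m * s i with hz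
  have hzrec : ∀ i, z (i + 1) = l * z i + 0 := by
    intro i
    simp only [hz, add_zero]
    have := hrecC i
    rw [← hsum, ← hprodc] at this
    calc ((s (i + 1 + 1) : ℝ) : ℂ) - m * s (i + 1)
        = ((s (i + 2) : ℝ) : ℂ) - m * s (i + 1) := by norm_num
      _ = (l + m) * s (i + 1) - (l * m) * s i - m * s (i + 1) := by rw [this]
      _ = l * (((s (i + 1) : ℝ) : ℂ) - m * s i) := by ring
  have hztend : Tendsto z atTop (nhds 0) :=
    iss_lemma l hl z (fun _ => 0) tendsto_const_nhds hzrec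
  have hsrec : ∀ i, ((s (i + 1) : ℝ) : ℂ) = m * s i + z i := by
    intro i
    simp only [hz]
    ring
  have hsCtend : Tendsto (fun i => ((s i : ℝ) : ℂ)) atTop (nhds 0) :=
    iss_lemma m hm _ z hztend hsrec
  have hstend : Tendsto s atTop (nhds 0) := by
    rw [tendsto_zero_iff_norm_tendsto_zero]
    rw [tendsto_zero_iff_norm_tendsto_zero] at hsCtend
    convert hsCtend using 2 with i
    rw [Complex.norm_real]
  have hs1tend : Tendsto (fun i => s (i + 1)) atTop (nhds 0) :=
    (tendsto_add_atTop_iff_nat 1).2 hstend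
  have hatend : Tendsto αtil atTop (nhds 0) := by
    have heq : ∀ i, αtil i = (s (i + 1) - ρ * s i) / T := by
      intro i
      rw [hs i]
      field_simp
      ring
    have h1 : Tendsto (fun i => (s (i + 1) - ρ * s i) / T) atTop (nhds 0) := by
      have := (hs1tend.sub (hstend.const_mul ρ)).div_const T
      simpa using this
    exact h1.congr (fun i => (heq i).symm)
  refine ⟨hstend, hatend, ?_⟩
  have := hatend.const_sub α
  simpa using this
end

section
/- Let 0 < ρ < 1, ρ_β > 0, T > 0 and f ∈ ℝ \ {0} satisfy T²·f² < (1 − ρ)·ρ_β. Let (s(i)), (β̃(i)) be real sequences satisfying s(i+1) = ρ·s(i) + T·f·β̃(i) and β̃(i+1) = β̃(i) − (T·f/ρ_β)·s(i) for all i. Then s(i) → 0 and β̃(i) → 0 as i → ∞; equivalently, the estimate β̂(i) = β − β̃(i) converges to the true multiplicative uncertainty β (nominal value 1 when there is no model error). -/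
set_option maxHeartbeats 1000000 in
/-- Algebraic one-step identity for the Lyapunov function of the closed loop. -/
lemma dsmc_key_id (ρ ρβ k δ u w d e A γ x y : ℝ) (hρβ : ρβ ≠ 0) (hk : k ≠ 0)
    (hδdef : δ = k ^ 2 / ρβ) (hudef : u = ρ + δ)
    (hwdef : w = δ / 2 + (1 - u) / 4)
    (hddef : d = -w * ρβ / k)
    (hedef : e = ρβ * (ρ + w * ρβ / k ^ 2 * (1 + δ - ρ)) - d ^ 2)
    (hAdef : A = ρ * u + w * (1 + u)) (hγdef : γ = ρβ * (1 - u) / 2) :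
    (ρ * x + k * y + d * (y - k / ρβ * x)) ^ 2 + e * (y - k / ρβ * x) ^ 2
      = ((x + d * y) ^ 2 + e * y ^ 2) + (A - 1) * x ^ 2 - γ * y ^ 2 := by
  subst hγdef hAdef hedef hddef hwdef hudef hδdef
  field_simp
  ring

lemma dsmc_quad_bound (d e x y : ℝ) (he : 0 ≤ e) :
    (x + d * y) ^ 2 + e * y ^ 2 ≤ (2 + 2 * d ^ 2 + e) * (x ^ 2 + y ^ 2) := by
  nlinarith [sq_nonneg (x - d * y), sq_nonneg x, sq_nonneg y, sq_nonneg (d * y), sq_nonneg d]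

set_option maxHeartbeats 1000000 in
/-- If `T² f² < (1 - ρ) ρ_β`, the coupled closed-loop recursions of the
multiplicative-uncertainty adaptive DSMC drive both the sliding variable and
the estimation error to zero; equivalently, the estimate `β̂ i = β - β̃ i`
converges to the true multiplicative uncertainty `β`. -/
theorem adaptive_dsmc_multiplicative_convergence (ρ ρβ T f β : ℝ)
    (hρ0 : 0 < ρ) (hρ1 : ρ < 1) (hρβ : 0 < ρβ) (hT : 0 < T) (hf : f ≠ 0)
    (hTf : T ^ 2 * f ^ 2 < (1 - ρ) * ρβ) (s βtil : ℕ → ℝ)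
    (hs : ∀ i, s (i + 1) = ρ * s i + T * f * βtil i)
    (hb : ∀ i, βtil (i + 1) = βtil i - (T * f / ρβ) * s i) :
    Filter.Tendsto s Filter.atTop (nhds 0) ∧
      Filter.Tendsto βtil Filter.atTop (nhds 0) ∧
      Filter.Tendsto (fun i => β - βtil i) Filter.atTop (nhds β) := by
  have hk0 : T * f ≠ 0 := mul_ne_zero (ne_of_gt hT) hf
  have hk2 : 0 < (T * f) ^ 2 := by positivity
  obtain ⟨k, hkdef⟩ : ∃ x : ℝ, x = T * f := ⟨_, rfl⟩
  rw [← hkdef] at hs hb hk0 hk2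
  obtain ⟨δ, hδdef⟩ : ∃ x : ℝ, x = k ^ 2 / ρβ := ⟨_, rfl⟩
  have hδ0 : 0 < δ := hδdef ▸ div_pos hk2 hρβ
  have hu1 : ρ + δ < 1 := by
    have hk2' : k ^ 2 < (1 - ρ) * ρβ := by
      have h : k ^ 2 = T ^ 2 * f ^ 2 := by rw [hkdef]; ring
      linarith [h ▸ hTf]
    have : δ < 1 - ρ := hδdef ▸ (div_lt_iff₀ hρβ).2 (by nlinarith)
    linarith
  obtain ⟨u, hudef⟩ : ∃ x : ℝ, x = ρ + δ := ⟨_, rfl⟩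
  have hu0 : 0 < u := by rw [hudef]; positivity
  have hu1' : 0 < 1 - u := by linarith
  obtain ⟨w, hwdef⟩ : ∃ x : ℝ, x = δ / 2 + (1 - u) / 4 := ⟨_, rfl⟩
  have hw0 : 0 < w := by rw [hwdef]; positivity
  obtain ⟨d, hddef⟩ : ∃ x : ℝ, x = -w * ρβ / k := ⟨_, rfl⟩
  obtain ⟨e, hedef⟩ : ∃ x : ℝ, x = ρβ * (ρ + w * ρβ / k ^ 2 * (1 + δ - ρ)) - d ^ 2 := ⟨_, rfl⟩
  have hwlt : w < 1 + δ - ρ := by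
    have h4 : u = ρ + δ := hudef
    have h5 : w = δ / 2 + (1 - u) / 4 := hwdef
    nlinarith
  have he : 0 < e := by
    have heq : e = ρβ * ρ + w * ρβ ^ 2 / k ^ 2 * (1 + δ - ρ - w) := by
      rw [hedef, hddef]
      field_simp
      ring
    rw [heq]
    have h1 : 0 < w * ρβ ^ 2 / k ^ 2 := by positivity
    nlinarith
  obtain ⟨A, hAdef⟩ : ∃ x : ℝ, x = ρ * u + w * (1 + u) := ⟨_, rfl⟩
  have hA0 : 0 < A := by rw [hAdef]; positivity
  have hA1 : A < 1 := by
    have h4 : u = ρ + δ := hudef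
    have h5 : w = δ / 2 + (1 - u) / 4 := hwdef
    rw [hAdef]
    nlinarith
  obtain ⟨γ, hγdef⟩ : ∃ x : ℝ, x = ρβ * (1 - u) / 2 := ⟨_, rfl⟩
  have hγ0 : 0 < γ := by rw [hγdef]; positivity
  obtain ⟨V, hVdef⟩ : ∃ F : ℕ → ℝ, F = fun i => (s i + d * βtil i) ^ 2 + e * βtil i ^ 2 := ⟨_, rfl⟩
  have hVnn : ∀ i, 0 ≤ V i := fun i => by rw [hVdef]; positivity
  have key : ∀ i, V (i + 1) = V i + (A - 1) * s i ^ 2 - γ * βtil i ^ 2 := by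
    intro i
    rw [hVdef]
    simp only []
    rw [hs i, hb i]
    exact dsmc_key_id ρ ρβ k δ u w d e A γ (s i) (βtil i) (ne_of_gt hρβ) hk0
      hδdef hudef hwdef hddef hedef hAdef hγdef
  obtain ⟨ε, hεdef⟩ : ∃ x : ℝ, x = min (1 - A) γ := ⟨_, rfl⟩
  have hε0 : 0 < ε := hεdef ▸ lt_min (by linarith) hγ0
  obtain ⟨C, hCdef⟩ : ∃ x : ℝ, x = 2 + 2 * d ^ 2 + e := ⟨_, rfl⟩
  have hC : 0 < C := by rw [hCdef]; positivity
  have hVC : ∀ i, V i ≤ C * (s i ^ 2 + βtil i ^ 2) := by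
    intro i
    rw [hVdef, hCdef]
    exact dsmc_quad_bound d e (s i) (βtil i) he.le
  obtain ⟨q, hqdef⟩ : ∃ x : ℝ, x = 1 - ε / C := ⟨_, rfl⟩
  have hεC : ε < C := by
    have h1 : ε ≤ 1 - A := hεdef ▸ min_le_left _ _
    have h2 : (2:ℝ) ≤ C := by rw [hCdef]; nlinarith [sq_nonneg d]
    linarith
  have hq0 : 0 ≤ q := by
    rw [hqdef]
    have : ε / C ≤ 1 := (div_le_one hC).2 hεC.le
    linarith
  have hq1 : q < 1 := by
    rw [hqdef]
    have : 0 < ε / C := div_pos hε0 hC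
    linarith
  have step : ∀ i, V (i + 1) ≤ q * V i := by
    intro i
    have h1 := key i
    have h2 : ε * (s i ^ 2 + βtil i ^ 2) ≤ (1 - A) * s i ^ 2 + γ * βtil i ^ 2 := by
      have ha : ε ≤ 1 - A := hεdef ▸ min_le_left _ _
      have hbb : ε ≤ γ := hεdef ▸ min_le_right _ _
      nlinarith [sq_nonneg (s i), sq_nonneg (βtil i)]
    have h3 : V i / C ≤ s i ^ 2 + βtil i ^ 2 := (div_le_iff₀ hC).2 (by linarith [hVC i])
    have h4 : ε * (V i / C) ≤ ε * (s i ^ 2 + βtil i ^ 2) :=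
      mul_le_mul_of_nonneg_left h3 hε0.le
    have h5 : q * V i = V i - ε * (V i / C) := by rw [hqdef]; field_simp
    linarith
  have bound : ∀ i, V i ≤ V 0 * q ^ i := by
    intro i
    induction i with
    | zero => simp
    | succ n ih =>
      calc V (n + 1) ≤ q * V n := step n
        _ ≤ q * (V 0 * q ^ n) := mul_le_mul_of_nonneg_left ih hq0
        _ = V 0 * q ^ (n + 1) := by ring
  have hVlim : Filter.Tendsto V Filter.atTop (nhds 0) := by
    have h1 : Filter.Tendsto (fun i => V 0 * q ^ i) Filter.atTop (nhds 0) := by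
      simpa using (tendsto_pow_atTop_nhds_zero_of_lt_one hq0 hq1).const_mul (V 0)
    exact squeeze_zero hVnn bound h1
  have hb2lim : Filter.Tendsto (fun i => βtil i ^ 2) Filter.atTop (nhds 0) := by
    have hle : ∀ i, βtil i ^ 2 ≤ V i / e := by
      intro i
      rw [le_div_iff₀ he]
      have : V i = (s i + d * βtil i) ^ 2 + e * βtil i ^ 2 := by rw [hVdef]
      nlinarith [sq_nonneg (s i + d * βtil i)]
    have h2 : Filter.Tendsto (fun i => V i / e) Filter.atTop (nhds 0) := by
      simpa using hVlim.div_const e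
    exact squeeze_zero (fun i => sq_nonneg _) hle h2
  have hbabs : Filter.Tendsto (fun i => |βtil i|) Filter.atTop (nhds 0) := by
    have h := (Real.continuous_sqrt.tendsto 0).comp hb2lim
    simpa [Function.comp_def, Real.sqrt_sq_eq_abs] using h
  have hbt : Filter.Tendsto βtil Filter.atTop (nhds 0) :=
    (tendsto_zero_iff_abs_tendsto_zero βtil).2 hbabs
  have hu2lim : Filter.Tendsto (fun i => (s i + d * βtil i) ^ 2) Filter.atTop (nhds 0) := by
    apply squeeze_zero (fun i => sq_nonneg _) (fun i => ?_) hVlim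
    have : V i = (s i + d * βtil i) ^ 2 + e * βtil i ^ 2 := by rw [hVdef]
    nlinarith [sq_nonneg (βtil i), he]
  have huabs : Filter.Tendsto (fun i => |s i + d * βtil i|) Filter.atTop (nhds 0) := by
    have h := (Real.continuous_sqrt.tendsto 0).comp hu2lim
    simpa [Function.comp_def, Real.sqrt_sq_eq_abs] using h
  have hut : Filter.Tendsto (fun i => s i + d * βtil i) Filter.atTop (nhds 0) :=
    (tendsto_zero_iff_abs_tendsto_zero _).2 huabs
  have hst : Filter.Tendsto s Filter.atTop (nhds 0) := by
    have h := hut.sub (hbt.const_mul d)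
    simpa using h
  exact ⟨hst, hbt, by simpa using Filter.Tendsto.const_sub β hbt⟩
end

section
/- Let T > 0, g ≠ 0, f : ℝ → ℝ, ρ ∈ ℝ, let (μ_u(i)) be a real sequence (the estimated propagated ADC uncertainty on the control signal), and let (x(i)), (x_d(i)) satisfy x(i+1) = x(i) + f(x(i))·T + g·u^{mod}(i)·T with the modified control u^{mod}(i) = (1/(gT))·[(ρ−1)x(i) − ρ·x_d(i) − f(x(i))·T + x_d(i+1)] − μ_u(i)·s(i), where s(i) = x(i) − x_d(i). Then s(i+1) = (ρ − g·T·μ_u(i))·s(i) for all i. Moreover, if there exists ρ̄ with 0 ≤ ρ̄ < 1 and |ρ − g·T·μ_u(i)| ≤ ρ̄ for all i, then s(i) → 0 as i → ∞. -/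
/-- Modified DSMC with ADC uncertainty compensation: under the dynamics
`x (i+1) = x i + f (x i) * T + g * u_mod i * T` with
`u_mod i = (1/(gT)) * ((ρ-1) x i - ρ x_d i - f (x i) T + x_d (i+1)) - μ_u i * s i`,
the sliding variable satisfies `s (i+1) = (ρ - g T μ_u i) * s i`. Moreover, if
there is `ρ̄` with `0 ≤ ρ̄ < 1` and `|ρ - g T μ_u i| ≤ ρ̄` for all `i`, then
`s i → 0`. -/
theorem modified_dsmc_adc_sliding_dynamics (T g ρ : ℝ) (hT : 0 < T)
    (hg : g ≠ 0) (f : ℝ → ℝ) (μu x x_d umod : ℕ → ℝ)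
    (hdyn : ∀ i, x (i + 1) = x i + f (x i) * T + g * umod i * T)
    (hctrl : ∀ i, umod i = (1 / (g * T)) *
      ((ρ - 1) * x i - ρ * x_d i - f (x i) * T + x_d (i + 1)) -
      μu i * (x i - x_d i)) :
    (∀ i, x (i + 1) - x_d (i + 1) = (ρ - g * T * μu i) * (x i - x_d i)) ∧
      ((∃ ρbar : ℝ, 0 ≤ ρbar ∧ ρbar < 1 ∧ ∀ i, |ρ - g * T * μu i| ≤ ρbar) →
        Filter.Tendsto (fun i => x i - x_d i) Filter.atTop (nhds 0)) := by
  have key : ∀ i, x (i + 1) - x_d (i + 1) = (ρ - g * T * μu i) * (x i - x_d i) := by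
    intro i
    have h := hdyn i
    rw [hctrl i] at h
    field_simp at h
    have hgT : g * T ≠ 0 := mul_ne_zero hg (ne_of_gt hT)
    have hx1 : x (i+1) = (x i + f (x i) * T) + (g * ((ρ - 1) * x i - ρ * x_d i - f (x i) * T + x_d (i + 1) - g * T * (μu i * (x i - x_d i))) * T) / (g*T) := by
      field_simp
      linarith [h]
    rw [hx1]; field_simp; ring
  refine ⟨key, ?_⟩
  rintro ⟨ρbar, h0, h1, hb⟩
  have hbound : ∀ i, |x i - x_d i| ≤ ρbar ^ i * |x 0 - x_d 0| := by
    intro i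
    induction i with
    | zero => simp
    | succ n ih =>
      rw [key n, abs_mul, pow_succ]
      calc |ρ - g * T * μu n| * |x n - x_d n| ≤ ρbar * (ρbar ^ n * |x 0 - x_d 0|) :=
            mul_le_mul (hb n) ih (abs_nonneg _) h0
        _ = ρbar ^ n * ρbar * |x 0 - x_d 0| := by ring
  have htend : Filter.Tendsto (fun i => ρbar ^ i * |x 0 - x_d 0|) Filter.atTop (nhds 0) := by
    have := tendsto_pow_atTop_nhds_zero_of_lt_one h0 h1
    simpa using this.mul_const |x 0 - x_d 0|
  have : Filter.Tendsto (fun i => |x i - x_d i|) Filter.atTop (nhds 0) :=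
    squeeze_zero (fun i => abs_nonneg _) hbound htend
  exact (tendsto_zero_iff_abs_tendsto_zero _).mpr this
end
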